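/- If g_0 is a probability density on an S_n-symmetric measurable set Ω with symmetrization h non-zero a.e., and φ : Ω → [0,1] is a generalized permutation test at significance level α with respect to g_0 (i.e., (1/n!) Σ_{π∈S_n} (g_0(πx)/h(x)) φ(πx) = α a.e.), then ∫_Ω g_0 φ dμ = α. -/

import Mathlib

/-!
Coordinate permutations preserve Lebesgue measure and `Ω`, so symmetrizing an integrable function
does not change its integral over `Ω`. Where `h = symmetrize g₀ ≠ 0`, the test condition says that
`symmetrize (g₀ * φ) = α * h`, hence `∫ g₀ φ = ∫ symmetrize (g₀ φ) = α ∫ h = α ∫ g₀ = α`.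
-/

open MeasureTheory

/-- The action of a permutation `π` on vectors: `(π • x) k = x (π k)`. -/
def permAct {n : ℕ} (π : Equiv.Perm (Fin n)) (x : Fin n → ℝ) : Fin n → ℝ := x ∘ π

/-- The symmetrization of `g₀`. -/
noncomputable def symmetrize {n : ℕ} (g₀ : (Fin n → ℝ) → ℝ) (x : Fin n → ℝ) : ℝ :=
  (1 / (n.factorial : ℝ)) * ∑ π : Equiv.Perm (Fin n), g₀ (permAct π x)

theorem integral_sum_comp_eq_card_smul {α ι E : Type*} [MeasurableSpace α] [Fintype ι]
    [NormedAddCommGroup E] [NormedSpace ℝ E] {μ : Measure α} (e : ι → α ≃ᵐ α)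
    (he : ∀ i, MeasurePreserving (e i) μ μ) {f : α → E} (hf : Integrable f μ) :
    ∫ x, ∑ i, f (e i x) ∂μ = Fintype.card ι • ∫ x, f x ∂μ := by
  have hcomp : ∀ i, Integrable (fun x ↦ f (e i x)) μ := fun i ↦
    ((he i).integrable_comp_emb (e i).measurableEmbedding).mpr hf
  rw [integral_finsetSum _ fun i _ ↦ hcomp i]
  simp only [fun i ↦ (he i).integral_comp' f, Finset.sum_const, Finset.card_univ]

section Permutations

variable {n : ℕ}

def permActEquiv (π : Equiv.Perm (Fin n)) : (Fin n → ℝ) ≃ᵐ (Fin n → ℝ) :=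
  MeasurableEquiv.piCongrLeft (fun _ ↦ ℝ) π.symm

@[simp]
theorem coe_permActEquiv (π : Equiv.Perm (Fin n)) : ⇑(permActEquiv π) = permAct π := by
  funext x i
  simp [permActEquiv, permAct, MeasurableEquiv.coe_piCongrLeft, Equiv.piCongrLeft_apply]

theorem preimage_permAct_eq {Ω : Set (Fin n → ℝ)}
    (hΩsym : ∀ (π : Equiv.Perm (Fin n)) (x : Fin n → ℝ), x ∈ Ω → permAct π x ∈ Ω)
    (π : Equiv.Perm (Fin n)) : permAct π ⁻¹' Ω = Ω := by
  refine Set.Subset.antisymm (fun x hx ↦ ?_) (hΩsym π)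
  simpa [permAct, Function.comp_assoc] using hΩsym π⁻¹ _ hx

theorem measurePreserving_permActEquiv (π : Equiv.Perm (Fin n)) :
    MeasurePreserving (permActEquiv π) :=
  volume_measurePreserving_piCongrLeft _ _

theorem measurePreserving_permActEquiv_restrict {Ω : Set (Fin n → ℝ)}
    (hΩsym : ∀ (π : Equiv.Perm (Fin n)) (x : Fin n → ℝ), x ∈ Ω → permAct π x ∈ Ω)
    (π : Equiv.Perm (Fin n)) :
    MeasurePreserving (permActEquiv π) (volume.restrict Ω) (volume.restrict Ω) := by
  simpa only [coe_permActEquiv, preimage_permAct_eq hΩsym] using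
    (measurePreserving_permActEquiv π).restrict_preimage_emb (permActEquiv π).measurableEmbedding Ω

theorem setIntegral_symmetrize {Ω : Set (Fin n → ℝ)}
    (hΩsym : ∀ (π : Equiv.Perm (Fin n)) (x : Fin n → ℝ), x ∈ Ω → permAct π x ∈ Ω)
    {f : (Fin n → ℝ) → ℝ} (hf : IntegrableOn f Ω) :
    ∫ x in Ω, symmetrize f x = ∫ x in Ω, f x := by
  have hsum := integral_sum_comp_eq_card_smul permActEquiv
    (measurePreserving_permActEquiv_restrict hΩsym) hf
  simp only [coe_permActEquiv, Fintype.card_perm, Fintype.card_fin, nsmul_eq_mul] at hsum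
  have hfac : (n.factorial : ℝ) ≠ 0 := Nat.cast_ne_zero.mpr n.factorial_ne_zero
  simp only [symmetrize]
  rw [integral_const_mul, hsum]
  field_simp

end Permutations

theorem stmt_10_general {n : ℕ} (Ω : Set (Fin n → ℝ))
    (hΩsym : ∀ (π : Equiv.Perm (Fin n)) (x : Fin n → ℝ), x ∈ Ω → permAct π x ∈ Ω)
    (g₀ : (Fin n → ℝ) → ℝ)
    (hg₀int : IntegrableOn g₀ Ω volume) (hdens : ∫ x in Ω, g₀ x = 1)
    (hne : ∀ᵐ x ∂(volume.restrict Ω), symmetrize g₀ x ≠ 0)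
    (α : ℝ) (φ : (Fin n → ℝ) → ℝ) (hφmeas : Measurable φ)
    (hφ01 : ∀ x, φ x ∈ Set.Icc (0 : ℝ) 1)
    (hgperm : ∀ᵐ x ∂(volume.restrict Ω),
      (1 / (n.factorial : ℝ)) *
        ∑ π : Equiv.Perm (Fin n), (g₀ (permAct π x) / symmetrize g₀ x) * φ (permAct π x) = α) :
    ∫ x in Ω, g₀ x * φ x = α := by
  have hint : IntegrableOn (fun x ↦ g₀ x * φ x) Ω := by
    refine hg₀int.mul_bdd hφmeas.aestronglyMeasurable (c := 1) (ae_of_all _ fun x ↦ ?_)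
    rw [Real.norm_eq_abs, abs_le]
    exact ⟨by linarith [(hφ01 x).1], (hφ01 x).2⟩
  have hsym : ∀ᵐ x ∂(volume.restrict Ω),
      symmetrize (fun y ↦ g₀ y * φ y) x = symmetrize g₀ x * α := by
    filter_upwards [hne, hgperm] with x hx hx'
    rw [← hx', symmetrize, Finset.mul_sum, Finset.mul_sum, Finset.mul_sum]
    refine Finset.sum_congr rfl fun π _ ↦ ?_
    field_simp
  calc ∫ x in Ω, g₀ x * φ x = ∫ x in Ω, symmetrize (fun y ↦ g₀ y * φ y) x :=
        (setIntegral_symmetrize hΩsym hint).symm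
    _ = ∫ x in Ω, symmetrize g₀ x * α := integral_congr_ae hsym
    _ = α := by rw [integral_mul_const, setIntegral_symmetrize hΩsym hg₀int, hdens, one_mul]

/-- A generalized permutation test is exact on probability densities whose symmetrization
is non-zero a.e. -/
theorem stmt_10 {n : ℕ} (Ω : Set (Fin n → ℝ)) (hΩmeas : MeasurableSet Ω)
    (hΩsym : ∀ (π : Equiv.Perm (Fin n)) (x : Fin n → ℝ), x ∈ Ω → permAct π x ∈ Ω)
    (g₀ : (Fin n → ℝ) → ℝ) (hg₀meas : Measurable g₀) (hg₀pos : ∀ x, 0 ≤ g₀ x)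
    (hg₀int : IntegrableOn g₀ Ω volume) (hdens : ∫ x in Ω, g₀ x = 1)
    (hne : ∀ᵐ x ∂(volume.restrict Ω), symmetrize g₀ x ≠ 0)
    (α : ℝ) (φ : (Fin n → ℝ) → ℝ) (hφmeas : Measurable φ)
    (hφ01 : ∀ x, φ x ∈ Set.Icc (0 : ℝ) 1)
    (hgperm : ∀ᵐ x ∂(volume.restrict Ω),
      (1 / (n.factorial : ℝ)) *
        ∑ π : Equiv.Perm (Fin n), (g₀ (permAct π x) / symmetrize g₀ x) * φ (permAct π x) = α) :
    ∫ x in Ω, g₀ x * φ x = α :=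
  stmt_10_general Ω hΩsym g₀ hg₀int hdens hne α φ hφmeas hφ01 hgperm
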